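/- Let n be a nonzero integer. The functions y ↦ √y·I_{7/2}(2π|n|y) and y ↦ √y·K_{7/2}(2π|n|y) both satisfy the homogeneous ordinary differential equation y²·g''(y) = (12 + 4π²n²y²)·g(y) on (0,∞), and every twice differentiable solution g : (0,∞) → ℂ of this equation is a unique ℂ-linear combination a·√y·I_{7/2}(2π|n|y) + b·√y·K_{7/2}(2π|n|y). For n = 0, every twice differentiable solution of y²·g''(y) = 12·g(y) on (0,∞) is a unique ℂ-linear combination a·y⁴ + b·y^{−3}. -/

import Mathlib

open Real

/-- The polynomial `P(x) = 1 + 6/x + 15/x² + 15/x³`. -/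
noncomputable def Pb (x : ℝ) : ℝ := 1 + 6 / x + 15 / x ^ 2 + 15 / x ^ 3

/-- Modified Bessel function `K_{7/2}(x) = √(π/(2x)) P(x) e^{−x}`. -/
noncomputable def K7half (x : ℝ) : ℝ := Real.sqrt (π / (2 * x)) * Pb x * Real.exp (-x)

/-- Modified Bessel function `I_{7/2}(x) = (1/√(2πx))(P(−x)e^x + P(x)e^{−x})`. -/
noncomputable def I7half (x : ℝ) : ℝ :=
  1 / Real.sqrt (2 * π * x) * (Pb (-x) * Real.exp x + Pb x * Real.exp (-x))

/-!
Dividing by `y²`, the equation reads `g'' = q g` on `(0, ∞)`, where `q(y) = 12/y² + c²` with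
`c = 2π|n|` is continuous. By uniqueness for the system `(g, g')' = (g', q g)`, which is Lipschitz on
compact subintervals, a solution is determined by `g` and `g'` at one point; so any two
solutions whose Wronskian does not vanish at `y = 1` span the solutions, with unique
coefficients.

For `c ≠ 0`, `w(x) = P(x) e^{-x}` satisfies `w'' = (12/x² + 1) w` for `x ≠ 0`, so both
`t ↦ w(ct)` and `t ↦ w(-ct)` solve the equation. Now `√t K_{7/2}(ct)` and `√t I_{7/2}(ct)` are
constant multiples of `w(ct)` and of `w(-ct) + w(ct)`, and `w(-x) w'(x) + w'(-x) w(x) = -2`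
makes their Wronskian nonzero. For `c = 0` the Euler equation `y² g'' = 12 g` has the
solutions `y^m` with `m (m - 1) = 12`, i.e. `m = 4` and `m = -3`.
-/

open Set Filter Topology

def IsSolution {𝕜 : Type*} [RCLike 𝕜] (q g g' : ℝ → 𝕜) : Prop :=
  ∀ y, 0 < y → HasDerivAt g (g' y) y ∧ HasDerivAt g' (q y * g y) y

namespace IsSolution

variable {𝕜 : Type*} [RCLike 𝕜] {q u u' v v' g g' : ℝ → 𝕜}

theorem add (hu : IsSolution q u u') (hv : IsSolution q v v') :
    IsSolution q (u + v) (u' + v') := fun y hy =>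
  ⟨(hu y hy).1.add (hv y hy).1, by simpa [mul_add] using (hu y hy).2.add (hv y hy).2⟩

theorem sub (hu : IsSolution q u u') (hv : IsSolution q v v') :
    IsSolution q (u - v) (u' - v') := fun y hy =>
  ⟨(hu y hy).1.sub (hv y hy).1, by simpa [mul_sub] using (hu y hy).2.sub (hv y hy).2⟩

theorem const_mul (a : 𝕜) (hu : IsSolution q u u') :
    IsSolution q (fun y => a * u y) (fun y => a * u' y) := fun y hy =>
  ⟨(hu y hy).1.const_mul a, by simpa [mul_left_comm] using (hu y hy).2.const_mul a⟩

theorem congr (hu : IsSolution q u u') (h : EqOn v u (Ioi 0)) : IsSolution q v u' :=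
  fun y hy => ⟨(hu y hy).1.congr_of_eventuallyEq (eventuallyEq_of_mem (Ioi_mem_nhds hy) h),
    by rw [h hy]; exact (hu y hy).2⟩

theorem ofReal {q u u' : ℝ → ℝ} (hu : IsSolution q u u') :
    IsSolution (fun y => (q y : ℂ)) (fun y => (u y : ℂ)) (fun y => (u' y : ℂ)) := fun y hy =>
  ⟨(hu y hy).1.ofReal_comp, by simpa using (hu y hy).2.ofReal_comp⟩

theorem deriv_deriv (hu : IsSolution q u u') {y : ℝ} (hy : 0 < y) :
    deriv (deriv u) y = q y * u y := by
  have : deriv u =ᶠ[𝓝 y] u' :=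
    eventually_of_mem (Ioi_mem_nhds hy) fun t ht => (hu t ht).1.deriv
  rw [this.deriv_eq, (hu y hy).2.deriv]

theorem of_deriv (h1 : ∀ y, 0 < y → DifferentiableAt ℝ u y)
    (h2 : ∀ y, 0 < y → DifferentiableAt ℝ (deriv u) y)
    (h : ∀ y, 0 < y → deriv (deriv u) y = q y * u y) : IsSolution q u (deriv u) :=
  fun y hy => ⟨(h1 y hy).hasDerivAt, h y hy ▸ (h2 y hy).hasDerivAt⟩

theorem eq_zero_of_initial_eq_zero (hq : ContinuousOn q (Ioi 0)) (hu : IsSolution q u u')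
    {y₀ : ℝ} (hy₀ : 0 < y₀) (h₀ : u y₀ = 0) (h₀' : u' y₀ = 0) {y : ℝ} (hy : 0 < y) :
    u y = 0 := by
  set a := min y y₀ / 2
  set b := max y y₀ + 1
  have ha : 0 < a := by positivity
  have hab : Icc a b ⊆ Ioi 0 := fun t ht => ha.trans_le ht.1
  obtain ⟨M, hM⟩ := isCompact_Icc.exists_bound_of_continuousOn (hq.mono hab)
  let F : ℝ → 𝕜 × 𝕜 → 𝕜 × 𝕜 := fun t z => (z.2, q t * z.1)
  have hF : ∀ t ∈ Ioo a b, LipschitzOnWith (max 1 (Real.toNNReal M)) (F t) univ := by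
    intro t ht
    have hqt := hM t (Ioo_subset_Icc_self ht)
    have hqt' : ‖q t‖₊ ≤ Real.toNNReal M :=
      (Real.le_toNNReal_iff_coe_le ((norm_nonneg _).trans hqt)).mpr hqt
    refine ((LipschitzWith.prod_snd.prodMk ((lipschitzWith_smul (q t)).comp
      LipschitzWith.prod_fst)).weaken ?_).lipschitzOnWith
    exact max_le_max le_rfl ((mul_one _).trans_le hqt')
  have hsol : ∀ t ∈ Ioo a b, HasDerivAt (fun t => (u t, u' t)) (F t (u t, u' t)) t ∧
      (u t, u' t) ∈ univ := fun t ht =>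
    ⟨(hu t (ha.trans ht.1)).1.prodMk (hu t (ha.trans ht.1)).2, trivial⟩
  have hzero : ∀ t ∈ Ioo a b, HasDerivAt (fun _ => ((0 : 𝕜), (0 : 𝕜))) (F t (0, 0)) t ∧
      ((0 : 𝕜), (0 : 𝕜)) ∈ univ := fun t _ =>
    ⟨(hasDerivAt_const t _).congr_deriv (Prod.ext (by simp [F]) (by simp [F])), trivial⟩
  have hmem : ∀ t, t ≤ max y y₀ → min y y₀ ≤ t → t ∈ Ioo a b := fun t h1 h2 =>
    ⟨by simp only [a]; linarith [lt_min hy hy₀], by simp only [b]; linarith⟩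
  exact congrArg Prod.fst (ODE_solution_unique_of_mem_Ioo hF
    (hmem y₀ (le_max_right _ _) (min_le_right _ _)) hsol hzero (by simp [h₀, h₀'])
    (hmem y (le_max_left _ _) (min_le_left _ _)))

theorem eq_add_iff_initial (hq : ContinuousOn q (Ioi 0)) (hu : IsSolution q u u')
    (hv : IsSolution q v v') (hg : IsSolution q g g') {y₀ : ℝ} (hy₀ : 0 < y₀) (a b : 𝕜) :
    (∀ y, 0 < y → g y = a * u y + b * v y) ↔
      g y₀ = a * u y₀ + b * v y₀ ∧ g' y₀ = a * u' y₀ + b * v' y₀ := by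
  have hcomb := (hu.const_mul a).add (hv.const_mul b)
  constructor
  · intro h
    refine ⟨h y₀ hy₀, (hg y₀ hy₀).1.unique ((hcomb y₀ hy₀).1.congr_of_eventuallyEq ?_)⟩
    exact eventually_of_mem (Ioi_mem_nhds hy₀) h
  · rintro ⟨h₀, h₀'⟩ y hy
    have := (hg.sub hcomb).eq_zero_of_initial_eq_zero hq hy₀ (by simp [h₀]) (by simp [h₀']) hy
    simpa [sub_eq_zero] using this

theorem existsUnique_eq_add (hq : ContinuousOn q (Ioi 0)) (hu : IsSolution q u u')
    (hv : IsSolution q v v') (hg : IsSolution q g g') {y₀ : ℝ} (hy₀ : 0 < y₀)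
    (hW : u y₀ * v' y₀ - u' y₀ * v y₀ ≠ 0) :
    ∃! ab : 𝕜 × 𝕜, ∀ y, 0 < y → g y = ab.1 * u y + ab.2 * v y := by
  simp only [eq_add_iff_initial hq hu hv hg hy₀]
  refine ⟨((g y₀ * v' y₀ - g' y₀ * v y₀) / (u y₀ * v' y₀ - u' y₀ * v y₀),
    (g' y₀ * u y₀ - g y₀ * u' y₀) / (u y₀ * v' y₀ - u' y₀ * v y₀)), ?_, ?_⟩
  · constructor <;>
      rw [div_mul_eq_mul_div, div_mul_eq_mul_div, ← add_div, eq_div_iff hW] <;> ring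
  · rintro ⟨a, b⟩ ⟨h₀, h₀'⟩
    ext
    · rw [eq_div_iff hW]; linear_combination v y₀ * h₀' - v' y₀ * h₀
    · rw [eq_div_iff hW]; linear_combination u' y₀ * h₀ - u y₀ * h₀'

end IsSolution

noncomputable def modeCoeff (c y : ℝ) : ℝ := 12 / y ^ 2 + c ^ 2

theorem modeCoeff_neg (c : ℝ) : modeCoeff (-c) = modeCoeff c := by
  funext y; rw [modeCoeff, modeCoeff, neg_sq]

theorem continuousOn_modeCoeff (c : ℝ) : ContinuousOn (modeCoeff c) (Ioi 0) :=
  ContinuousOn.add (continuousOn_const.div (continuousOn_id.pow 2)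
    fun _ hy => pow_ne_zero 2 (ne_of_gt hy)) continuousOn_const

theorem IsSolution.sq_mul_deriv_deriv {c : ℝ} {u u' : ℝ → ℝ}
    (hu : IsSolution (modeCoeff c) u u') {y : ℝ} (hy : 0 < y) :
    y ^ 2 * deriv (deriv u) y = (12 + c ^ 2 * y ^ 2) * u y := by
  rw [hu.deriv_deriv hy, modeCoeff]
  field_simp

theorem existsUnique_of_sq_mul_deriv_deriv {c : ℝ} {u u' v v' : ℝ → ℝ}
    (hu : IsSolution (modeCoeff c) u u') (hv : IsSolution (modeCoeff c) v v')
    (hW : u 1 * v' 1 - u' 1 * v 1 ≠ 0) {g : ℝ → ℂ}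
    (hg₁ : ∀ y, 0 < y → DifferentiableAt ℝ g y)
    (hg₂ : ∀ y, 0 < y → DifferentiableAt ℝ (deriv g) y)
    (hg : ∀ y : ℝ, 0 < y →
      (y : ℂ) ^ 2 * deriv (deriv g) y = ((12 + c ^ 2 * y ^ 2 : ℝ) : ℂ) * g y) :
    ∃! ab : ℂ × ℂ, ∀ y, 0 < y → g y = ab.1 * u y + ab.2 * v y := by
  have hsol : IsSolution (fun y => (modeCoeff c y : ℂ)) g (deriv g) := by
    refine IsSolution.of_deriv hg₁ hg₂ fun y hy => ?_
    have hy' : (y : ℂ) ≠ 0 := Complex.ofReal_ne_zero.mpr hy.ne'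
    apply mul_left_cancel₀ (pow_ne_zero 2 hy')
    rw [hg y hy, modeCoeff]
    push_cast
    field_simp
  exact IsSolution.existsUnique_eq_add
    (Complex.continuous_ofReal.comp_continuousOn (continuousOn_modeCoeff c)) hu.ofReal hv.ofReal
    hsol one_pos (by exact_mod_cast hW)

theorem isSolution_zpow {m : ℤ} (hm : (m * (m - 1) : ℝ) = 12) :
    IsSolution (modeCoeff 0) (fun y => y ^ m) (fun y => m * y ^ (m - 1)) := fun y hy =>
  ⟨hasDerivAt_zpow m y (Or.inl hy.ne'),
    ((hasDerivAt_zpow (m - 1) y (Or.inl hy.ne')).const_mul (m : ℝ)).congr_deriv (by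
      rw [modeCoeff, ← hm, zpow_sub₀ hy.ne', zpow_sub₀ hy.ne']
      push_cast
      field_simp
      ring)⟩

theorem existsUnique_pow_four_add_zpow_neg_three {g : ℝ → ℂ}
    (hg₁ : ∀ y, 0 < y → DifferentiableAt ℝ g y)
    (hg₂ : ∀ y, 0 < y → DifferentiableAt ℝ (deriv g) y)
    (hg : ∀ y : ℝ, 0 < y → (y : ℂ) ^ 2 * deriv (deriv g) y = 12 * g y) :
    ∃! ab : ℂ × ℂ, ∀ y : ℝ, 0 < y → g y = ab.1 * (y : ℂ) ^ 4 + ab.2 * (y : ℂ) ^ (-3 : ℤ) := by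
  have h := existsUnique_of_sq_mul_deriv_deriv (isSolution_zpow (m := 4) (by norm_num))
    (isSolution_zpow (m := -3) (by norm_num)) (by norm_num) hg₁ hg₂ (c := 0) (by simpa using hg)
  exact_mod_cast h

noncomputable def pExp (x : ℝ) : ℝ := Pb x * exp (-x)

noncomputable def pExpDeriv (x : ℝ) : ℝ :=
  -(1 + 6 / x + 21 / x ^ 2 + 45 / x ^ 3 + 45 / x ^ 4) * exp (-x)

theorem hasDerivAt_pExp {x : ℝ} (hx : x ≠ 0) : HasDerivAt pExp (pExpDeriv x) x := by
  have hP : HasDerivAt Pb (-6 / x ^ 2 - 30 / x ^ 3 - 45 / x ^ 4) x :=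
    ((((hasDerivAt_const x (1 : ℝ)).add
      ((hasDerivAt_const x (6 : ℝ)).div (hasDerivAt_id x) hx)).add
      ((hasDerivAt_const x (15 : ℝ)).div (hasDerivAt_pow 2 x) (pow_ne_zero 2 hx))).add
      ((hasDerivAt_const x (15 : ℝ)).div (hasDerivAt_pow 3 x) (pow_ne_zero 3 hx))).congr_deriv
      (by simp only [id]; field_simp; ring)
  exact (hP.mul (hasDerivAt_neg x).exp).congr_deriv (by rw [pExpDeriv, Pb]; field_simp; ring)

theorem hasDerivAt_pExpDeriv {x : ℝ} (hx : x ≠ 0) :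
    HasDerivAt pExpDeriv (modeCoeff 1 x * pExp x) x := by
  have hQ : HasDerivAt (fun x : ℝ => -(1 + 6 / x + 21 / x ^ 2 + 45 / x ^ 3 + 45 / x ^ 4))
      (6 / x ^ 2 + 42 / x ^ 3 + 135 / x ^ 4 + 180 / x ^ 5) x :=
    (((((hasDerivAt_const x (1 : ℝ)).add
      ((hasDerivAt_const x (6 : ℝ)).div (hasDerivAt_id x) hx)).add
      ((hasDerivAt_const x (21 : ℝ)).div (hasDerivAt_pow 2 x) (pow_ne_zero 2 hx))).add
      ((hasDerivAt_const x (45 : ℝ)).div (hasDerivAt_pow 3 x) (pow_ne_zero 3 hx))).add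
      ((hasDerivAt_const x (45 : ℝ)).div (hasDerivAt_pow 4 x) (pow_ne_zero 4 hx))).neg.congr_deriv
      (by simp only [id]; field_simp; ring)
  exact (hQ.mul (hasDerivAt_neg x).exp).congr_deriv
    (by rw [modeCoeff, pExp, Pb]; field_simp; ring)

theorem pExp_neg_mul_pExpDeriv_add {x : ℝ} (hx : x ≠ 0) :
    pExp (-x) * pExpDeriv x + pExpDeriv (-x) * pExp x = -2 := by
  rw [pExp, pExp, pExpDeriv, pExpDeriv, Pb, Pb, neg_neg, exp_neg]
  field_simp
  ring

theorem isSolution_pExp_comp_mul {c : ℝ} (hc : c ≠ 0) :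
    IsSolution (modeCoeff c) (fun t => pExp (c * t)) (fun t => c * pExpDeriv (c * t)) :=
  fun y hy => by
    have hcy : c * y ≠ 0 := mul_ne_zero hc hy.ne'
    have hlin : HasDerivAt (fun t => c * t) c y := by simpa using (hasDerivAt_id y).const_mul c
    refine ⟨((hasDerivAt_pExp hcy).comp y hlin).congr_deriv (mul_comm _ _),
      (((hasDerivAt_pExpDeriv hcy).comp y hlin).const_mul c).congr_deriv ?_⟩
    rw [modeCoeff, modeCoeff]
    field_simp

section Bessel

variable {c : ℝ}

theorem sqrt_mul_I7half (hc : 0 < c) {t : ℝ} (ht : 0 < t) :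
    √t * I7half (c * t) = (√(2 * π * c))⁻¹ * (pExp (-c * t) + pExp (c * t)) := by
  have hs : √t ≠ 0 := (sqrt_pos.mpr ht).ne'
  have hs' : √(2 * π * c) ≠ 0 := (sqrt_pos.mpr (by positivity)).ne'
  rw [I7half, pExp, pExp, show 2 * π * (c * t) = 2 * π * c * t by ring,
    sqrt_mul (by positivity), neg_mul, neg_neg]
  field_simp

theorem sqrt_mul_K7half (hc : 0 < c) {t : ℝ} (ht : 0 < t) :
    √t * K7half (c * t) = √(π / (2 * c)) * pExp (c * t) := by
  have hs : √t ≠ 0 := (sqrt_pos.mpr ht).ne'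
  rw [K7half, pExp, show π / (2 * (c * t)) = π / (2 * c) / t by field_simp,
    sqrt_div (by positivity)]
  field_simp

theorem isSolution_sqrt_mul_I7half (hc : 0 < c) :
    IsSolution (modeCoeff c) (fun t => √t * I7half (c * t))
      (fun t => (√(2 * π * c))⁻¹ * (-c * pExpDeriv (-c * t) + c * pExpDeriv (c * t))) :=
  (((modeCoeff_neg c ▸ isSolution_pExp_comp_mul (neg_ne_zero.mpr hc.ne')).add
    (isSolution_pExp_comp_mul (c := c) hc.ne')).const_mul _).congr
      fun _ ht => sqrt_mul_I7half hc ht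

theorem isSolution_sqrt_mul_K7half (hc : 0 < c) :
    IsSolution (modeCoeff c) (fun t => √t * K7half (c * t))
      (fun t => √(π / (2 * c)) * (c * pExpDeriv (c * t))) :=
  ((isSolution_pExp_comp_mul hc.ne').const_mul _).congr fun _ ht => sqrt_mul_K7half hc ht

theorem existsUnique_sqrt_mul_I7half_add_K7half (hc : 0 < c) {g : ℝ → ℂ}
    (hg₁ : ∀ y, 0 < y → DifferentiableAt ℝ g y)
    (hg₂ : ∀ y, 0 < y → DifferentiableAt ℝ (deriv g) y)
    (hg : ∀ y : ℝ, 0 < y →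
      (y : ℂ) ^ 2 * deriv (deriv g) y = ((12 + c ^ 2 * y ^ 2 : ℝ) : ℂ) * g y) :
    ∃! ab : ℂ × ℂ, ∀ y : ℝ, 0 < y →
      g y = ab.1 * (√y * I7half (c * y) : ℝ) + ab.2 * (√y * K7half (c * y) : ℝ) := by
  refine existsUnique_of_sq_mul_deriv_deriv (isSolution_sqrt_mul_I7half hc)
    (isSolution_sqrt_mul_K7half hc) ?_ hg₁ hg₂ hg
  rw [sqrt_mul_I7half hc one_pos, sqrt_mul_K7half hc one_pos]
  simp only [mul_one, neg_mul]
  have hw := pExp_neg_mul_pExpDeriv_add hc.ne'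
  have hpos : 0 < c * (√(2 * π * c))⁻¹ * √(π / (2 * c)) := by positivity
  intro h
  have : c * (√(2 * π * c))⁻¹ * √(π / (2 * c)) * 2 = 0 := by
    linear_combination c * (√(2 * π * c))⁻¹ * √(π / (2 * c)) * hw - h
  linarith

end Bessel

/-- `√y·I_{7/2}(2π|n|y)` and `√y·K_{7/2}(2π|n|y)` solve the homogeneous
mode equation, every solution is a unique linear combination of them (for `n ≠ 0`),
and for `n = 0` every solution of `y²g'' = 12g` is a unique combination `a y⁴ + b y⁻³`. -/
theorem homogeneous_solution_space (n : ℤ) (hn : n ≠ 0) :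
    (∀ y : ℝ, 0 < y →
        y ^ 2 * deriv (deriv (fun t : ℝ => Real.sqrt t * I7half (2 * π * |(n : ℝ)| * t))) y =
          (12 + 4 * π ^ 2 * (n : ℝ) ^ 2 * y ^ 2) *
            (Real.sqrt y * I7half (2 * π * |(n : ℝ)| * y))) ∧
    (∀ y : ℝ, 0 < y →
        y ^ 2 * deriv (deriv (fun t : ℝ => Real.sqrt t * K7half (2 * π * |(n : ℝ)| * t))) y =
          (12 + 4 * π ^ 2 * (n : ℝ) ^ 2 * y ^ 2) *
            (Real.sqrt y * K7half (2 * π * |(n : ℝ)| * y))) ∧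
    (∀ g : ℝ → ℂ,
      (∀ y : ℝ, 0 < y → DifferentiableAt ℝ g y) →
      (∀ y : ℝ, 0 < y → DifferentiableAt ℝ (deriv g) y) →
      (∀ y : ℝ, 0 < y →
        (y : ℂ) ^ 2 * deriv (deriv g) y =
          (((12 : ℝ) + 4 * π ^ 2 * (n : ℝ) ^ 2 * y ^ 2 : ℝ) : ℂ) * g y) →
      ∃! ab : ℂ × ℂ, ∀ y : ℝ, 0 < y →
        g y = ab.1 * (Real.sqrt y * I7half (2 * π * |(n : ℝ)| * y) : ℝ) +
              ab.2 * (Real.sqrt y * K7half (2 * π * |(n : ℝ)| * y) : ℝ)) ∧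
    (∀ g : ℝ → ℂ,
      (∀ y : ℝ, 0 < y → DifferentiableAt ℝ g y) →
      (∀ y : ℝ, 0 < y → DifferentiableAt ℝ (deriv g) y) →
      (∀ y : ℝ, 0 < y → (y : ℂ) ^ 2 * deriv (deriv g) y = 12 * g y) →
      ∃! ab : ℂ × ℂ, ∀ y : ℝ, 0 < y →
        g y = ab.1 * (y : ℂ) ^ 4 + ab.2 * (y : ℂ) ^ (-3 : ℤ)) := by
  set c := 2 * π * |(n : ℝ)| with hc_def
  have hc : 0 < c := by
    have : 0 < |(n : ℝ)| := abs_pos.mpr (Int.cast_ne_zero.mpr hn)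
    positivity
  have hc2 : 4 * π ^ 2 * (n : ℝ) ^ 2 = c ^ 2 := by rw [hc_def, mul_pow, mul_pow, sq_abs]; ring
  simp only [hc2]
  exact ⟨fun y hy => (isSolution_sqrt_mul_I7half hc).sq_mul_deriv_deriv hy,
    fun y hy => (isSolution_sqrt_mul_K7half hc).sq_mul_deriv_deriv hy,
    fun g hg₁ hg₂ hg => existsUnique_sqrt_mul_I7half_add_K7half hc hg₁ hg₂ hg,
    fun g hg₁ hg₂ hg => existsUnique_pow_four_add_zpow_neg_three hg₁ hg₂ hg⟩
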